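/- arXiv:2204.03323 — 2 statements merged into one kernel-verified Lean document; each statement's English description precedes it below -/
import Mathlib

section
/- For all real γ ≥ 1.72865 and all integers N ≥ 2, if the weights are defined by w_i = i^(-γ) / C where C = Σ_{j=1}^N j^(-γ), then w_1 > Σ_{i=2}^N w_i. -/
/-!
Since `i ^ (-γ)` decreases in `γ`, it suffices to show `∑_{i ≥ 2} i ^ (-γ₀) < 1`, i.e.
`ζ(γ₀) < 2`, for `γ₀ = 1.72865 = 34573 / 20000`; the margin is only about `3.4 · 10⁻⁶`
(`ζ(γ) = 2` at `γ ≈ 1.7286472`). The terms `2 ≤ i ≤ 50` are bounded by dyadic rationals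
`r / 2 ^ 40` whose numerators come from an integer binary search for `20000`-th roots, so that
the kernel can check the final inequality between natural numbers. For the tail, convexity of
`x ↦ x ^ (-s)` gives the midpoint bound `i ^ (-s) ≤ ∫_{i-1/2}^{i+1/2} x ^ (-s)`, hence
`∑_{i > 50} i ^ (-s) ≤ 50.5 ^ (1 - s) / (s - 1)`, whose error `O(50 ^ (-s-1))` fits in the
margin.
-/

open Finset

theorem ConvexOn.two_mul_mul_le_integral {f : ℝ → ℝ} {m h : ℝ}
    (hf : ConvexOn ℝ (Set.Icc (m - h) (m + h)) f)
    (hfi : IntervalIntegrable f MeasureTheory.volume (m - h) (m + h)) (hh : 0 ≤ h) :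
    2 * h * f m ≤ ∫ x in (m - h)..(m + h), f x := by
  have hmid : ∀ t ∈ Set.Icc (-h) h, 2 * f m ≤ f (m + t) + f (m - t) := by
    intro t ⟨ht₁, ht₂⟩
    have := hf.2 (⟨by linarith, by linarith⟩ : m + t ∈ Set.Icc (m - h) (m + h))
      (⟨by linarith, by linarith⟩ : m - t ∈ Set.Icc (m - h) (m + h))
      (by norm_num : (0 : ℝ) ≤ 1 / 2) (by norm_num : (0 : ℝ) ≤ 1 / 2) (by norm_num)
    rw [smul_eq_mul, smul_eq_mul, smul_eq_mul, smul_eq_mul,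
      show 1 / 2 * (m + t) + 1 / 2 * (m - t) = m by ring] at this
    linarith
  have hright : IntervalIntegrable (fun t ↦ f (m + t)) MeasureTheory.volume (-h) h := by
    simpa using hfi.comp_add_left m
  have hleft : IntervalIntegrable (fun t ↦ f (m - t)) MeasureTheory.volume (-h) h := by
    simpa using (hfi.comp_sub_left m).symm
  have hshift : ∫ t in (-h)..h, f (m + t) = ∫ x in (m - h)..(m + h), f x := by
    rw [intervalIntegral.integral_comp_add_left, ← sub_eq_add_neg]
  have hreflect : ∫ t in (-h)..h, f (m - t) = ∫ x in (m - h)..(m + h), f x := by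
    rw [intervalIntegral.integral_comp_sub_left, sub_neg_eq_add]
  have := intervalIntegral.integral_mono_on (by linarith) intervalIntegrable_const
    (hright.add hleft) hmid
  rw [intervalIntegral.integral_add hright hleft, hshift, hreflect,
    intervalIntegral.integral_const, smul_eq_mul] at this
  linarith

theorem ConvexOn.sum_Ioc_le_integral {f : ℝ → ℝ} {k n : ℕ}
    (hf : ConvexOn ℝ (Set.Ici ((k : ℝ) + 1 / 2)) f)
    (hfc : ContinuousOn f (Set.Ici ((k : ℝ) + 1 / 2))) (hkn : k ≤ n) :
    ∑ i ∈ Ioc k n, f i ≤ ∫ x in ((k : ℝ) + 1 / 2)..((n : ℝ) + 1 / 2), f x := by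
  have hint : ∀ a b : ℝ, (k : ℝ) + 1 / 2 ≤ a → a ≤ b →
      IntervalIntegrable f MeasureTheory.volume a b := fun a b hka hab ↦
    ContinuousOn.intervalIntegrable <| hfc.mono <| by
      rw [Set.uIcc_of_le hab]; exact (Set.Icc_subset_Ici_iff hab).2 hka
  induction n, hkn using Nat.le_induction with
  | base => simp
  | succ n hkn ih =>
    have hkn' : (k : ℝ) ≤ n := by exact_mod_cast hkn
    have hstep := (hf.subset ((Set.Icc_subset_Ici_iff (by linarith)).2 (by linarith))
      (convex_Icc _ _)).two_mul_mul_le_integral (m := (n : ℝ) + 1)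
      (hint _ _ (by linarith) (by linarith)) (by norm_num : (0 : ℝ) ≤ 1 / 2)
    rw [show (n : ℝ) + 1 - 1 / 2 = n + 1 / 2 by ring, show (2 : ℝ) * (1 / 2) = 1 by norm_num,
      one_mul] at hstep
    rw [sum_Ioc_succ_top hkn, Nat.cast_succ,
      ← intervalIntegral.integral_add_adjacent_intervals (b := (n : ℝ) + 1 / 2)
        (hint _ _ le_rfl (by linarith)) (hint _ _ (by linarith) (by linarith))]
    exact add_le_add ih hstep

theorem Real.convexOn_rpow_neg {s : ℝ} (hs : 0 ≤ s) :
    ConvexOn ℝ (Set.Ioi 0) fun x : ℝ ↦ x ^ (-s) := by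
  have hlog : ConvexOn ℝ (Set.Ioi 0) fun x : ℝ ↦ -s * Real.log x := by
    simpa [neg_mul, smul_eq_mul] using (strictConcaveOn_log_Ioi.concaveOn.neg).smul hs
  refine ((convexOn_exp.subset (Set.subset_univ _) ?_).comp hlog
    (Real.exp_monotone.monotoneOn _)).congr fun x hx ↦ ?_
  · rw [Real.convex_iff_isPreconnected]
    exact isPreconnected_Ioi.image _ fun x hx ↦
      (continuousAt_const.mul (Real.continuousAt_log (Set.mem_Ioi.1 hx).ne')).continuousWithinAt
  · simp [Real.rpow_def_of_pos (Set.mem_Ioi.1 hx), mul_comm]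

theorem sum_Ioc_rpow_neg_le {s : ℝ} (hs : 1 < s) (k n : ℕ) :
    ∑ i ∈ Ioc k n, (i : ℝ) ^ (-s) ≤ ((k : ℝ) + 1 / 2) ^ (1 - s) / (s - 1) := by
  have hs₁ : 0 < s - 1 := by linarith
  rcases lt_or_ge n k with hnk | hkn
  · rw [Ioc_eq_empty_of_le hnk.le, sum_empty]
    positivity
  have hpos : Set.Ici ((k : ℝ) + 1 / 2) ⊆ Set.Ioi 0 := fun x hx ↦
    lt_of_lt_of_le (by positivity) (Set.mem_Ici.1 hx)
  calc ∑ i ∈ Ioc k n, (i : ℝ) ^ (-s)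
      ≤ ∫ x in ((k : ℝ) + 1 / 2)..((n : ℝ) + 1 / 2), x ^ (-s) :=
        ((Real.convexOn_rpow_neg (by linarith)).subset hpos (convex_Ici _)).sum_Ioc_le_integral
          (fun x hx ↦
            (Real.continuousAt_rpow_const _ _ (Or.inl (hpos hx).ne')).continuousWithinAt)
          hkn
    _ = (((k : ℝ) + 1 / 2) ^ (1 - s) - ((n : ℝ) + 1 / 2) ^ (1 - s)) / (s - 1) := by
        rw [integral_rpow (Or.inr ⟨by linarith, fun h0 ↦ ?_⟩)]
        · rw [show -s + 1 = 1 - s by ring, ← neg_sub s 1, div_neg, ← neg_div, neg_sub]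
        · rw [Set.uIcc_of_le (by gcongr)] at h0
          exact (Set.mem_Ioi.1 (hpos h0.1)).false
    _ ≤ ((k : ℝ) + 1 / 2) ^ (1 - s) / (s - 1) := by
        gcongr
        simp only [sub_le_self_iff]; positivity

/-- Binary search for the least `x ∈ (a, a + 2 ^ b]` with `m ≤ x ^ k`. -/
def Nat.ceilRootSearch (k m : ℕ) : ℕ → ℕ → ℕ
  | 0, a => a + 1
  | b + 1, a =>
    if (a + 2 ^ b) ^ k < m then Nat.ceilRootSearch k m b (a + 2 ^ b) else Nat.ceilRootSearch k m b a

theorem Nat.le_ceilRootSearch_pow {k m b a : ℕ} (h : m ≤ (a + 2 ^ b) ^ k) :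
    m ≤ Nat.ceilRootSearch k m b a ^ k := by
  induction b generalizing a with
  | zero => simpa [Nat.ceilRootSearch] using h
  | succ b ih =>
    rw [Nat.ceilRootSearch]
    split_ifs with hlt
    · exact ih (by rwa [add_assoc, ← two_mul, ← pow_succ'])
    · exact ih (not_lt.1 hlt)

/-- The numerator of the least dyadic `r / 2 ^ b` above `(u / v) ^ (-(p / q))`. -/
def rpowNegUpper (b u v p q : ℕ) : ℕ :=
  Nat.ceilRootSearch q (2 ^ (b * q) * v ^ p / u ^ p + 1) b 0

theorem pow_mul_lt_rpowNegUpper_pow_mul {b u v p q : ℕ} (hvu : v < u) (hp : p ≠ 0) :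
    2 ^ (b * q) * v ^ p < rpowNegUpper b u v p q ^ q * u ^ p := by
  have hu : 0 < u ^ p := pow_pos (by omega) p
  have hvpu : v ^ p < u ^ p := Nat.pow_lt_pow_left hvu hp
  have hroot : 2 ^ (b * q) * v ^ p / u ^ p + 1 ≤ rpowNegUpper b u v p q ^ q := by
    refine Nat.le_ceilRootSearch_pow ?_
    rw [zero_add, ← pow_mul, mul_comm b, Nat.add_one_le_iff, Nat.div_lt_iff_lt_mul hu]
    exact Nat.mul_lt_mul_of_pos_left hvpu (by positivity)
  calc 2 ^ (b * q) * v ^ p < (2 ^ (b * q) * v ^ p / u ^ p + 1) * u ^ p := by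
        rw [add_one_mul]; exact Nat.lt_div_mul_add hu
    _ ≤ rpowNegUpper b u v p q ^ q * u ^ p := Nat.mul_le_mul_right _ hroot

theorem rpow_neg_le_rpowNegUpper {b u v p q : ℕ} (hv : 0 < v) (hvu : v < u) (hp : p ≠ 0)
    (hq : q ≠ 0) :
    ((u : ℝ) / v) ^ (-(p / q : ℝ)) ≤ rpowNegUpper b u v p q / 2 ^ b := by
  have hu : (0 : ℝ) < u := by exact_mod_cast hv.trans hvu
  have hx : 0 < (u : ℝ) / v := by positivity
  rw [← pow_le_pow_iff_left₀ (Real.rpow_nonneg hx.le _) (by positivity) hq,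
    ← Real.rpow_natCast, ← Real.rpow_mul hx.le,
    show -(p / q : ℝ) * q = -(p : ℕ) by field_simp, Real.rpow_neg hx.le, Real.rpow_natCast,
    div_pow, div_pow, inv_div, div_le_div_iff₀ (by positivity) (by positivity),
    ← pow_mul, mul_comm]
  exact_mod_cast (pow_mul_lt_rpowNegUpper_pow_mul (b := b) (q := q) hvu hp).le

theorem sum_Icc_two_fifty_rpow_neg_le :
    ∑ i ∈ Icc 2 50, ((i : ℕ) : ℝ) ^ (-(34573 / 20000 : ℝ)) ≤
      (∑ i ∈ Icc 2 50, rpowNegUpper 40 i 1 34573 20000 : ℕ) / 2 ^ 40 := by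
  rw [Nat.cast_sum, sum_div]
  refine sum_le_sum fun i hi ↦ ?_
  have h := rpow_neg_le_rpowNegUpper (b := 40) (v := 1) (p := 34573) (q := 20000) one_pos
    (mem_Icc.1 hi).1 (by norm_num) (by norm_num)
  rwa [Nat.cast_one, div_one, Nat.cast_ofNat, Nat.cast_ofNat] at h

theorem sum_Ioc_fifty_rpow_neg_le (N : ℕ) :
    ∑ i ∈ Ioc 50 N, (i : ℝ) ^ (-(34573 / 20000 : ℝ)) ≤
      rpowNegUpper 40 101 2 14573 20000 / 2 ^ 40 / (14573 / 20000) := by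
  have hbase : ((50 : ℕ) : ℝ) + 1 / 2 = ((101 : ℕ) : ℝ) / (2 : ℕ) := by norm_num
  have hexp : 1 - (34573 / 20000 : ℝ) = -((14573 : ℕ) / (20000 : ℕ) : ℝ) := by norm_num
  have hden : (34573 / 20000 : ℝ) - 1 = 14573 / 20000 := by norm_num
  calc ∑ i ∈ Ioc 50 N, (i : ℝ) ^ (-(34573 / 20000 : ℝ))
      ≤ (((50 : ℕ) : ℝ) + 1 / 2) ^ (1 - (34573 / 20000 : ℝ)) / (34573 / 20000 - 1) :=
        sum_Ioc_rpow_neg_le (by norm_num) 50 N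
    _ ≤ rpowNegUpper 40 101 2 14573 20000 / 2 ^ 40 / (14573 / 20000) := by
        rw [hbase, hexp, hden]
        gcongr
        exact rpow_neg_le_rpowNegUpper (by norm_num) (by norm_num) (by norm_num) (by norm_num)

theorem rpowNegUpper_certificate :
    14573 * ∑ i ∈ Icc 2 50, rpowNegUpper 40 i 1 34573 20000 +
      20000 * rpowNegUpper 40 101 2 14573 20000 < 14573 * 2 ^ 40 := by
  decide +kernel

theorem sum_Icc_two_rpow_neg_lt_one {γ : ℝ} (hγ : 1.72865 ≤ γ) (N : ℕ) :
    ∑ i ∈ Icc 2 N, (i : ℝ) ^ (-γ) < 1 := by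
  set H := ∑ i ∈ Icc 2 50, rpowNegUpper 40 i 1 34573 20000
  set T := rpowNegUpper 40 101 2 14573 20000
  have hcert : (14573 * H + 20000 * T : ℝ) < 14573 * 2 ^ 40 := by
    exact_mod_cast rpowNegUpper_certificate
  have hsum : (H : ℝ) / 2 ^ 40 + T / 2 ^ 40 / (14573 / 20000) =
      (14573 * H + 20000 * T) / (14573 * 2 ^ 40) := by
    field_simp
  calc ∑ i ∈ Icc 2 N, (i : ℝ) ^ (-γ)
      ≤ ∑ i ∈ Icc 2 N, (i : ℝ) ^ (-(34573 / 20000 : ℝ)) :=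
        sum_le_sum fun i hi ↦ Real.rpow_le_rpow_of_exponent_le
          (by exact_mod_cast (mem_Icc.1 hi).1.trans' one_le_two) (by linarith)
    _ ≤ ∑ i ∈ Icc 2 50 ∪ Ioc 50 N, ((i : ℕ) : ℝ) ^ (-(34573 / 20000 : ℝ)) :=
        sum_le_sum_of_subset_of_nonneg (fun i ↦ by simp only [mem_union, mem_Icc, mem_Ioc]; omega)
          fun _ _ _ ↦ by positivity
    _ = ∑ i ∈ Icc 2 50, ((i : ℕ) : ℝ) ^ (-(34573 / 20000 : ℝ)) +
          ∑ i ∈ Ioc 50 N, (i : ℝ) ^ (-(34573 / 20000 : ℝ)) :=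
        sum_union (disjoint_left.2 fun i ↦ by simp only [mem_Icc, mem_Ioc]; omega)
    _ ≤ H / 2 ^ 40 + T / 2 ^ 40 / (14573 / 20000) :=
        add_le_add sum_Icc_two_fifty_rpow_neg_le (sum_Ioc_fifty_rpow_neg_le N)
    _ < 1 := by rwa [hsum, div_lt_one (by positivity)]

/-- For all real γ ≥ 1.72865 and integers N ≥ 2, the ζ-mixup weights
w_i = i^(-γ)/C with C = ∑_{j=1}^N j^(-γ) satisfy w_1 > ∑_{i=2}^N w_i. -/
theorem zeta_mixup_weight_dominance
    (γ : ℝ) (hγ : γ ≥ 1.72865) (N : ℕ) (hN : 2 ≤ N) :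
    ((1 : ℝ) ^ (-γ)) / (∑ j ∈ Finset.Icc 1 N, (j : ℝ) ^ (-γ)) >
      ∑ i ∈ Finset.Icc 2 N, ((i : ℝ) ^ (-γ)) / (∑ j ∈ Finset.Icc 1 N, (j : ℝ) ^ (-γ)) := by
  have hC : 0 < ∑ j ∈ Icc 1 N, (j : ℝ) ^ (-γ) :=
    sum_pos (fun j hj ↦ Real.rpow_pos_of_pos (by exact_mod_cast (mem_Icc.1 hj).1) _)
      ⟨1, mem_Icc.2 ⟨le_rfl, by omega⟩⟩
  rw [← sum_div, gt_iff_lt, div_lt_div_iff_of_pos_right hC, Real.one_rpow]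
  exact sum_Icc_two_rpow_neg_lt_one hγ N
end

section
/- Let λ ∈ (0,1) and set γ = log₂(λ/(1-λ)). Then for N = 2, the ζ-mixup weights w_1 = 1^(-γ)/(1^(-γ) + 2^(-γ)) and w_2 = 2^(-γ)/(1^(-γ) + 2^(-γ)) satisfy w_1 = λ and w_2 = 1 - λ. -/
/-! With `γ = log₂ (λ / (1 - λ))` one has `1 ^ (-γ) = 1` and `2 ^ (-γ) = (1 - λ) / λ`, so the
normalising constant is `1 + (1 - λ) / λ = 1 / λ`, and dividing the two weights by it gives
`λ` and `1 - λ`. -/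

theorem one_add_one_sub_div_self {K : Type*} [DivisionRing K] {l : K} (hl : l ≠ 0) :
    1 + (1 - l) / l = l⁻¹ := by
  rw [sub_div, div_self hl, one_div, add_sub_cancel]

theorem Real.rpow_neg_logb {b x : ℝ} (hb : 0 < b) (hb₁ : b ≠ 1) (hx : 0 < x) :
    b ^ (-Real.logb b x) = x⁻¹ := by
  rw [← Real.logb_inv, Real.rpow_logb hb hb₁ (inv_pos.2 hx)]

/-- For λ ∈ (0,1) and γ = log₂(λ/(1-λ)), the N = 2 ζ-mixup weights equal
λ and 1 - λ. -/
theorem zeta_mixup_two_weights_eq_mixup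
    (l : ℝ) (hl : l ∈ Set.Ioo (0 : ℝ) 1) :
    ((1 : ℝ) ^ (-(Real.logb 2 (l / (1 - l)))) /
        ((1 : ℝ) ^ (-(Real.logb 2 (l / (1 - l)))) +
          (2 : ℝ) ^ (-(Real.logb 2 (l / (1 - l)))))) = l ∧
    ((2 : ℝ) ^ (-(Real.logb 2 (l / (1 - l)))) /
        ((1 : ℝ) ^ (-(Real.logb 2 (l / (1 - l)))) +
          (2 : ℝ) ^ (-(Real.logb 2 (l / (1 - l)))))) = 1 - l := by
  obtain ⟨hl₀, hl₁⟩ := hl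
  have hratio : 0 < l / (1 - l) := div_pos hl₀ (sub_pos.2 hl₁)
  rw [Real.one_rpow, Real.rpow_neg_logb two_pos (by norm_num) hratio, inv_div,
    one_add_one_sub_div_self hl₀.ne']
  exact ⟨by rw [one_div, inv_inv], by rw [div_inv_eq_mul, div_mul_cancel₀ _ hl₀.ne']⟩
end
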